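/- Let X_1, X_2, … be pairwise uncorrelated complex-valued random variables with E[X_i] = 0 and V[X_i] ≤ C uniformly bounded. Then S_n = X_1 + ⋯ + X_n satisfies S_n(ω) = o(n^{1/2} (log n)^{3/2+ε}) almost surely for every ε > 0. -/

import Mathlib

/-!
Rademacher–Menshov chaining. With `M = ⌊log₂ n⌋ + 1`, the interval `(0, n]` is a disjoint union of
dyadic blocks `(2ʲk, 2ʲ(k+1)]`, at most one on each level `j ≤ M`, so by Cauchy–Schwarz
`‖S n‖² ≤ (M + 1) D_M`, where `D_M` is the sum of the squared block sums over all levels.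
Orthogonality gives `E D_M ≤ (M + 1) 2^M C`, hence `∑_M E[(M + 1) D_M / (2^M (M + 1)^q)] < ∞`
for `q > 3`, and the normalized energies tend to `0` almost surely. As `2^M ≤ 2n` and
`M + 1 ≲ log n`, this gives `S n = o(n^{1/2} (log n)^{q/2})`; take `q = 3 + 2ε`.
-/

open MeasureTheory Filter Topology Finset

section Orthogonality

variable {Ω : Type*} [MeasurableSpace Ω] {P : Measure Ω}

lemma MeasureTheory.MemLp.integrable_conj_mul {f g : Ω → ℂ} (hf : MemLp f 2 P)
    (hg : MemLp g 2 P) : Integrable (fun ω => starRingEnd ℂ (f ω) * g ω) P :=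
  hf.star.integrable_mul hg

variable {X : ℕ → Ω → ℂ}

lemma integral_norm_sum_sq_of_uncorrelated (hL2 : ∀ i, MemLp (X i) 2 P)
    (huncorr : ∀ i j, i ≠ j → ∫ ω, starRingEnd ℂ (X i ω) * X j ω ∂P = 0) (s : Finset ℕ) :
    ∫ ω, ‖∑ i ∈ s, X i ω‖ ^ 2 ∂P = ∑ i ∈ s, ∫ ω, ‖X i ω‖ ^ 2 ∂P := by
  have hint i j := (hL2 i).integrable_conj_mul (hL2 j)
  apply Complex.ofReal_injective
  calc ((∫ ω, ‖∑ i ∈ s, X i ω‖ ^ 2 ∂P : ℝ) : ℂ)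
      = ∫ ω, ∑ i ∈ s, ∑ j ∈ s, starRingEnd ℂ (X i ω) * X j ω ∂P := by
        rw [← integral_complex_ofReal]
        simp_rw [Complex.ofReal_pow, ← Complex.conj_mul', map_sum, sum_mul_sum]
    _ = ∑ i ∈ s, ∑ j ∈ s, ∫ ω, starRingEnd ℂ (X i ω) * X j ω ∂P := by
        rw [integral_finsetSum _ fun i _ => integrable_finsetSum _ fun j _ => hint i j]
        exact sum_congr rfl fun i _ => integral_finsetSum _ fun j _ => hint i j
    _ = ∑ i ∈ s, ∫ ω, starRingEnd ℂ (X i ω) * X i ω ∂P :=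
        sum_congr rfl fun i hi => sum_eq_single_of_mem i hi fun j _ hji => huncorr i j hji.symm
    _ = ((∑ i ∈ s, ∫ ω, ‖X i ω‖ ^ 2 ∂P : ℝ) : ℂ) := by
        simp_rw [Complex.conj_mul', ← Complex.ofReal_pow, integral_complex_ofReal, Complex.ofReal_sum]

lemma integral_norm_sum_sq_le_card_mul {C : ℝ} (hL2 : ∀ i, MemLp (X i) 2 P)
    (hvar : ∀ i, ∫ ω, ‖X i ω‖ ^ 2 ∂P ≤ C)
    (huncorr : ∀ i j, i ≠ j → ∫ ω, starRingEnd ℂ (X i ω) * X j ω ∂P = 0) (s : Finset ℕ) :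
    ∫ ω, ‖∑ i ∈ s, X i ω‖ ^ 2 ∂P ≤ #s * C := by
  rw [integral_norm_sum_sq_of_uncorrelated hL2 huncorr, ← nsmul_eq_mul]
  exact sum_le_card_nsmul _ _ _ fun i _ => hvar i

end Orthogonality

lemma MeasureTheory.ae_tendsto_zero_of_summable_integral_norm {α E : Type*} [MeasurableSpace α]
    {μ : Measure α} [NormedAddCommGroup E] {f : ℕ → α → E} (hf : ∀ n, Integrable (f n) μ)
    (hs : Summable fun n => ∫ a, ‖f n a‖ ∂μ) :
    ∀ᵐ a ∂μ, Tendsto (fun n => f n a) atTop (𝓝 0) := by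
  have h : ∑' n, eLpNorm (f n) 1 μ ≠ ⊤ := by
    simp_rw [eLpNorm_one_eq_lintegral_enorm, ← ofReal_integral_norm_eq_lintegral_enorm (hf _),
      ← ENNReal.ofReal_tsum_of_nonneg (fun n => integral_nonneg fun _ => norm_nonneg _) hs]
    exact ENNReal.ofReal_ne_top
  filter_upwards [summable_norm_of_tsum_eLpNorm_ne_top le_rfl (fun n => (hf n).1) h] with a ha
  exact tendsto_zero_iff_norm_tendsto_zero.2 ha.tendsto_atTop_zero

def dyadicFloor (j n : ℕ) : ℕ := 2 ^ j * (n / 2 ^ j)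

lemma dyadicFloor_succ (j n : ℕ) : dyadicFloor (j + 1) n = 2 ^ j * (2 * (n / 2 ^ j / 2)) := by
  rw [dyadicFloor, pow_succ, ← Nat.div_div_eq_div_mul, mul_assoc]

lemma dyadicFloor_le (j n : ℕ) : dyadicFloor j n ≤ n := Nat.mul_div_le n _

lemma dyadicFloor_succ_le (j n : ℕ) : dyadicFloor (j + 1) n ≤ dyadicFloor j n := by
  rw [dyadicFloor_succ]
  exact Nat.mul_le_mul_left _ (Nat.mul_div_le _ _)

lemma dyadicFloor_eq_zero {j n : ℕ} (hn : n < 2 ^ j) : dyadicFloor j n = 0 := by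
  simp [dyadicFloor, Nat.div_eq_of_lt hn]

section Dyadic

variable {E : Type*} [SeminormedAddCommGroup E] (a : ℕ → E)

def dyadicBlock (j k : ℕ) : E := ∑ i ∈ Ioc (2 ^ j * k) (2 ^ j * (k + 1)), a i

noncomputable def dyadicEnergy (M : ℕ) : ℝ :=
  ∑ j ∈ range (M + 1), ∑ k ∈ range (2 ^ (M - j)), ‖dyadicBlock a j k‖ ^ 2

noncomputable def normalizedDyadicEnergy (q : ℝ) (M : ℕ) : ℝ :=
  (M + 1) * dyadicEnergy a M / (2 ^ M * ((M : ℝ) + 1) ^ q)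

lemma normalizedDyadicEnergy_nonneg (q : ℝ) (M : ℕ) : 0 ≤ normalizedDyadicEnergy a q M := by
  unfold normalizedDyadicEnergy dyadicEnergy
  positivity

lemma sum_range_sum_Ioc_dyadicFloor (M n : ℕ) :
    ∑ j ∈ range M, ∑ i ∈ Ioc (dyadicFloor (j + 1) n) (dyadicFloor j n), a i =
      ∑ i ∈ Ioc (dyadicFloor M n) n, a i := by
  induction M with
  | zero => simp [dyadicFloor]
  | succ M ih =>
    rw [sum_range_succ, ih, add_comm,
      sum_Ioc_consecutive _ (dyadicFloor_succ_le M n) (dyadicFloor_le M n)]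

/-- Between consecutive dyadic floors of `n` lies either nothing or a single dyadic block. -/
lemma exists_norm_sum_Ioc_dyadicFloor_le {M n j : ℕ} (hn : n ≤ 2 ^ M) (hj : j ≤ M) :
    ∃ k < 2 ^ (M - j),
      ‖∑ i ∈ Ioc (dyadicFloor (j + 1) n) (dyadicFloor j n), a i‖ ≤ ‖dyadicBlock a j k‖ := by
  have hq : n / 2 ^ j ≤ 2 ^ (M - j) :=
    (Nat.div_le_div_right hn).trans_eq (Nat.pow_div hj two_pos)
  rw [dyadicFloor_succ, dyadicFloor]
  obtain ⟨r, hr | hr⟩ := Nat.even_or_odd' (n / 2 ^ j)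
  · refine ⟨0, Nat.two_pow_pos _, ?_⟩
    simp [hr]
  · refine ⟨2 * r, by omega, le_of_eq ?_⟩
    rw [hr, show (2 * r + 1) / 2 = r by omega]
    rfl

lemma exists_norm_sum_Ioc_le_sum_norm_dyadicBlock {M n : ℕ} (hn : n ≤ 2 ^ M) :
    ∃ k : ℕ → ℕ, (∀ j ≤ M, k j < 2 ^ (M - j)) ∧
      ‖∑ i ∈ Ioc 0 n, a i‖ ≤ ∑ j ∈ range (M + 1), ‖dyadicBlock a j (k j)‖ := by
  choose! k hk hle using fun j (hj : j ≤ M) => exists_norm_sum_Ioc_dyadicFloor_le a hn hj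
  refine ⟨k, hk, ?_⟩
  have htele := sum_range_sum_Ioc_dyadicFloor a (M + 1) n
  rw [dyadicFloor_eq_zero (hn.trans_lt (Nat.pow_lt_pow_succ one_lt_two))] at htele
  rw [← htele]
  exact (norm_sum_le _ _).trans (sum_le_sum fun j hj => hle j (mem_range_succ_iff.1 hj))

lemma norm_sum_Ioc_sq_le_mul_dyadicEnergy {M n : ℕ} (hn : n ≤ 2 ^ M) :
    ‖∑ i ∈ Ioc 0 n, a i‖ ^ 2 ≤ (M + 1) * dyadicEnergy a M := by
  obtain ⟨k, hk, hS⟩ := exists_norm_sum_Ioc_le_sum_norm_dyadicBlock a hn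
  calc ‖∑ i ∈ Ioc 0 n, a i‖ ^ 2 ≤ (∑ j ∈ range (M + 1), ‖dyadicBlock a j (k j)‖) ^ 2 := by
        gcongr
    _ ≤ (M + 1) * ∑ j ∈ range (M + 1), ‖dyadicBlock a j (k j)‖ ^ 2 := by
        simpa using sq_sum_le_card_mul_sum_sq (s := range (M + 1))
          (f := fun j => ‖dyadicBlock a j (k j)‖)
    _ ≤ (M + 1) * dyadicEnergy a M := by
        unfold dyadicEnergy
        gcongr with j hj
        exact single_le_sum (fun k _ => sq_nonneg ‖dyadicBlock a j k‖)
          (mem_range.2 (hk j (mem_range_succ_iff.1 hj)))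

lemma two_pow_succ_log_mul_rpow_le {q : ℝ} (hq : 0 ≤ q) {n : ℕ} (hn : 2 ≤ n) :
    (2 : ℝ) ^ (Nat.log 2 n + 1) * (((Nat.log 2 n + 1 : ℕ) : ℝ) + 1) ^ q ≤
      2 * (3 / Real.log 2) ^ q * (n * Real.log n ^ q) := by
  have hlog2 := Real.log_pos one_lt_two
  have hpow : (2 : ℝ) ^ Nat.log 2 n ≤ n := by exact_mod_cast Nat.pow_log_le_self 2 (by omega)
  have hlog : (Nat.log 2 n : ℝ) * Real.log 2 ≤ Real.log n := by
    rw [← Real.log_pow]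
    exact Real.log_le_log (by positivity) hpow
  have hlogn : Real.log 2 ≤ Real.log n := Real.log_le_log two_pos (by exact_mod_cast hn)
  have hM : ((Nat.log 2 n + 1 : ℕ) : ℝ) + 1 ≤ 3 / Real.log 2 * Real.log n := by
    rw [div_mul_eq_mul_div, le_div_iff₀ hlog2]
    push_cast
    linarith
  calc _ ≤ (2 * n) * (3 / Real.log 2 * Real.log n) ^ q := by
        gcongr
        rw [pow_succ]
        linarith
    _ = _ := by
        rw [Real.mul_rpow (by positivity) (by linarith)]
        ring

lemma norm_sum_Icc_le_sqrt_normalizedDyadicEnergy {p : ℝ} (hp : 0 ≤ p) {n : ℕ} (hn : 2 ≤ n) :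
    ‖∑ i ∈ Icc 1 n, a i‖ ≤
      √(2 * (3 / Real.log 2) ^ (2 * p) * normalizedDyadicEnergy a (2 * p) (Nat.log 2 n + 1)) *
        ((n : ℝ) ^ ((1 : ℝ) / 2) * Real.log n ^ p) := by
  set M := Nat.log 2 n + 1
  have hlogn : 0 < Real.log n := Real.log_pos (by exact_mod_cast hn)
  have hS : ‖∑ i ∈ Icc 1 n, a i‖ ^ 2 ≤ normalizedDyadicEnergy a (2 * p) M *
      (2 ^ M * ((M : ℝ) + 1) ^ (2 * p)) := by
    rw [normalizedDyadicEnergy, div_mul_cancel₀ _ (by positivity), show Icc 1 n = Ioc 0 n from Icc_succ_left_eq_Ioc 0 n]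
    exact norm_sum_Ioc_sq_le_mul_dyadicEnergy a (Nat.lt_pow_succ_log_self one_lt_two n).le
  have hden : ((n : ℝ) ^ ((1 : ℝ) / 2) * Real.log n ^ p) ^ 2 = n * Real.log n ^ (2 * p) := by
    rw [mul_pow, ← Real.sqrt_eq_rpow, Real.sq_sqrt n.cast_nonneg,
      ← Real.rpow_mul_natCast hlogn.le, Nat.cast_ofNat, mul_comm p]
  have hf := normalizedDyadicEnergy_nonneg a (2 * p) M
  have hgrowth := two_pow_succ_log_mul_rpow_le (by positivity : (0 : ℝ) ≤ 2 * p) hn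
  have hden0 : 0 ≤ (n : ℝ) ^ ((1 : ℝ) / 2) * Real.log n ^ p := by
    have := Real.rpow_nonneg hlogn.le p
    positivity
  rw [← Real.sqrt_sq hden0, ← Real.sqrt_mul (by positivity), hden,
    Real.le_sqrt (norm_nonneg _) (by positivity)]
  refine hS.trans ?_
  calc _ ≤ normalizedDyadicEnergy a (2 * p) M * (2 * (3 / Real.log 2) ^ (2 * p) *
        (n * Real.log n ^ (2 * p))) := by gcongr
    _ = _ := by ring

end Dyadic

section Energy

variable {Ω : Type*} [MeasurableSpace Ω] {P : Measure Ω} {X : ℕ → Ω → ℂ} {C : ℝ}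

lemma integrable_dyadicEnergy (hL2 : ∀ i, MemLp (X i) 2 P) (M : ℕ) :
    Integrable (fun ω => dyadicEnergy (X · ω) M) P :=
  integrable_finsetSum _ fun _ _ => integrable_finsetSum _ fun _ _ =>
    (memLp_finsetSum _ fun i _ => hL2 i).norm.integrable_sq

lemma integral_dyadicEnergy_le (hL2 : ∀ i, MemLp (X i) 2 P)
    (hvar : ∀ i, ∫ ω, ‖X i ω‖ ^ 2 ∂P ≤ C)
    (huncorr : ∀ i j, i ≠ j → ∫ ω, starRingEnd ℂ (X i ω) * X j ω ∂P = 0) (M : ℕ) :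
    ∫ ω, dyadicEnergy (X · ω) M ∂P ≤ (M + 1) * (2 ^ M * C) := by
  have hblock : ∀ j k, Integrable (fun ω => ‖dyadicBlock (X · ω) j k‖ ^ 2) P := fun _ _ =>
    (memLp_finsetSum _ fun i _ => hL2 i).norm.integrable_sq
  unfold dyadicEnergy
  rw [integral_finsetSum _ fun j _ => integrable_finsetSum _ fun k _ => hblock j k]
  calc _ ≤ ∑ j ∈ range (M + 1), 2 ^ M * C := by
        refine sum_le_sum fun j hj => ?_
        rw [integral_finsetSum _ fun k _ => hblock j k]
        calc _ ≤ ∑ k ∈ range (2 ^ (M - j)), 2 ^ j * C := by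
              refine sum_le_sum fun k _ => ?_
              have hcard : #(Ioc (2 ^ j * k) (2 ^ j * (k + 1))) = 2 ^ j := by
                rw [Nat.card_Ioc, mul_add_one, Nat.add_sub_cancel_left]
              have := integral_norm_sum_sq_le_card_mul hL2 hvar huncorr
                (Ioc (2 ^ j * k) (2 ^ j * (k + 1)))
              rwa [hcard, Nat.cast_pow, Nat.cast_ofNat] at this
          _ = 2 ^ M * C := by
              rw [sum_const, card_range, nsmul_eq_mul, ← mul_assoc]
              norm_cast
              rw [← pow_add, Nat.sub_add_cancel (mem_range_succ_iff.1 hj)]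
    _ = _ := by simp

lemma ae_tendsto_normalizedDyadicEnergy (hL2 : ∀ i, MemLp (X i) 2 P)
    (hvar : ∀ i, ∫ ω, ‖X i ω‖ ^ 2 ∂P ≤ C)
    (huncorr : ∀ i j, i ≠ j → ∫ ω, starRingEnd ℂ (X i ω) * X j ω ∂P = 0) {q : ℝ} (hq : 3 < q) :
    ∀ᵐ ω ∂P, Tendsto (fun M => normalizedDyadicEnergy (X · ω) q M) atTop (𝓝 0) := by
  refine ae_tendsto_zero_of_summable_integral_norm
    (fun M => ((integrable_dyadicEnergy hL2 M).const_mul _).div_const _) ?_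
  have hsum : Summable fun M : ℕ => C * ((M : ℝ) + 1) ^ (2 - q) := by
    have := (summable_nat_add_iff 1).2 (Real.summable_nat_rpow.2 (by linarith : 2 - q < -1))
    exact (this.mul_left C).congr fun M => by push_cast; rfl
  refine hsum.of_nonneg_of_le (fun M => integral_nonneg fun _ => norm_nonneg _) fun M => ?_
  simp_rw [Real.norm_of_nonneg (normalizedDyadicEnergy_nonneg _ q M)]
  have hM : (0 : ℝ) < M + 1 := by positivity
  calc ∫ ω, normalizedDyadicEnergy (X · ω) q M ∂P
      = (M + 1) / (2 ^ M * ((M : ℝ) + 1) ^ q) * ∫ ω, dyadicEnergy (X · ω) M ∂P := by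
        rw [← integral_const_mul]
        congr 1 with ω
        rw [normalizedDyadicEnergy]
        ring
    _ ≤ (M + 1) / (2 ^ M * ((M : ℝ) + 1) ^ q) * ((M + 1) * (2 ^ M * C)) := by
        gcongr
        exact integral_dyadicEnergy_le hL2 hvar huncorr M
    _ = C * ((M : ℝ) + 1) ^ (2 - q) := by
        rw [Real.rpow_sub hM, Real.rpow_two]
        field_simp

end Energy

theorem stmt_6_general {Ω : Type*} [MeasurableSpace Ω] (P : Measure Ω)
    (X : ℕ → Ω → ℂ) (C : ℝ)
    (hL2 : ∀ i, MemLp (X i) 2 P)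
    (hvar : ∀ i, ∫ ω, ‖X i ω‖ ^ 2 ∂P ≤ C)
    (huncorr : ∀ i j, i ≠ j → ∫ ω, (starRingEnd ℂ) (X i ω) * X j ω ∂P = 0)
    (ε : ℝ) (hε : 0 < ε) :
    ∀ᵐ ω ∂P, Tendsto
      (fun n : ℕ => (∑ i ∈ Finset.Icc 1 n, X i ω) /
        ((((n : ℝ) ^ ((1:ℝ)/2) * Real.log n ^ ((3:ℝ)/2 + ε) : ℝ)) : ℂ))
      atTop (𝓝 0) := by
  have hlog : Tendsto (fun n => Nat.log 2 n + 1) atTop atTop :=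
    tendsto_atTop_atTop.2 fun b =>
      ⟨2 ^ b, fun n hn => (Nat.le_log_of_pow_le one_lt_two hn).trans (Nat.le_succ _)⟩
  filter_upwards [ae_tendsto_normalizedDyadicEnergy hL2 hvar huncorr
    (show 3 < 2 * (3 / 2 + ε) by linarith)] with ω hω
  rw [tendsto_zero_iff_norm_tendsto_zero]
  refine squeeze_zero' (Eventually.of_forall fun _ => norm_nonneg _) ?_
    (by simpa using ((hω.comp hlog).const_mul (2 * (3 / Real.log 2) ^ (2 * (3 / 2 + ε)))).sqrt)
  filter_upwards [eventually_ge_atTop 2] with n hn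
  have hden : 0 < (n : ℝ) ^ ((1 : ℝ) / 2) * Real.log n ^ (3 / 2 + ε) :=
    mul_pos (by positivity) (Real.rpow_pos_of_pos (Real.log_pos (by exact_mod_cast hn)) _)
  rw [norm_div, Complex.norm_real, Real.norm_of_nonneg hden.le, div_le_iff₀ hden]
  exact norm_sum_Icc_le_sqrt_normalizedDyadicEnergy (X · ω) (by positivity) hn

/-- The `α = 0` case of the quasi law of the iterated logarithm: pairwise
uncorrelated centered complex random variables with uniformly bounded variances
satisfy `S n = o(n^(1/2) (log n)^(3/2+ε))` almost surely. -/
theorem stmt_6 {Ω : Type*} [MeasurableSpace Ω] (P : Measure Ω) [IsProbabilityMeasure P]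
    (X : ℕ → Ω → ℂ) (C : ℝ)
    (hL2 : ∀ i, MemLp (X i) 2 P)
    (hmean : ∀ i, ∫ ω, X i ω ∂P = 0)
    (hvar : ∀ i, ∫ ω, ‖X i ω‖ ^ 2 ∂P ≤ C)
    (huncorr : ∀ i j, i ≠ j → ∫ ω, (starRingEnd ℂ) (X i ω) * X j ω ∂P = 0)
    (ε : ℝ) (hε : 0 < ε) :
    ∀ᵐ ω ∂P, Tendsto
      (fun n : ℕ => (∑ i ∈ Finset.Icc 1 n, X i ω) /
        ((((n : ℝ) ^ ((1:ℝ)/2) * Real.log n ^ ((3:ℝ)/2 + ε) : ℝ)) : ℂ))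
      atTop (𝓝 0) :=
  stmt_6_general P X C hL2 hvar huncorr ε hε
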